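/- Let T = (c₁,0,c₃,0,0,0,f₁,f₂,f₃,f₄,t₁,t₂) and T′ = (c₁,0,c₃,0,0,0,f₁′,f₂′,f₃′,f₄′,t₁′,t₂′) be tuples in ℤ¹² with the same values c₁ ≠ 0 and c₃ ≠ 0, and suppose c₁ ∣ f₁, c₁ ∣ f₁′, c₃ ∣ f₃ and c₃ ∣ f₃′. Then T and T′ are ψ-equivalent if and only if: f₂ = f₂′; f₄ ≡ f₄′ (mod gcd(c₁,c₃)); c₁t₁ + f₁f₄ ≡ c₁t₁′ + f₁′f₄′ (mod c₁·gcd(c₃,f₂)); and c₃t₂ + f₃f₄ ≡ c₃t₂′ + f₃′f₄′ (mod c₃·gcd(c₁,f₂)). -/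

import Mathlib

/-- A 12-tuple of integers, with coordinates written `(c₁,…,c₆,f₁,…,f₄,t₁,t₂)`. -/
structure Tuple : Type where
  c1 : ℤ
  c2 : ℤ
  c3 : ℤ
  c4 : ℤ
  c5 : ℤ
  c6 : ℤ
  f1 : ℤ
  f2 : ℤ
  f3 : ℤ
  f4 : ℤ
  t1 : ℤ
  t2 : ℤ

/-- The move ψ₂₁ : f₃↦f₃+c₅, f₄↦f₄−c₁, t₁↦t₁+f₁. -/
def psi21 : Equiv.Perm Tuple where
  toFun x := { x with f3 := x.f3 + x.c5, f4 := x.f4 - x.c1, t1 := x.t1 + x.f1 }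
  invFun x := { x with f3 := x.f3 - x.c5, f4 := x.f4 + x.c1, t1 := x.t1 - x.f1 }
  left_inv x := by cases x; simp
  right_inv x := by cases x; simp

/-- The move ψ₄₁ : f₂↦f₂+c₆, f₃↦f₃−c₅, t₂↦t₂−f₁. -/
def psi41 : Equiv.Perm Tuple where
  toFun x := { x with f2 := x.f2 + x.c6, f3 := x.f3 - x.c5, t2 := x.t2 - x.f1 }
  invFun x := { x with f2 := x.f2 - x.c6, f3 := x.f3 + x.c5, t2 := x.t2 + x.f1 }
  left_inv x := by cases x; simp
  right_inv x := by cases x; simp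

/-- The move ψ₁₂ : f₃↦f₃−c₄, f₄↦f₄+c₂, t₁↦t₁+f₂. -/
def psi12 : Equiv.Perm Tuple where
  toFun x := { x with f3 := x.f3 - x.c4, f4 := x.f4 + x.c2, t1 := x.t1 + x.f2 }
  invFun x := { x with f3 := x.f3 + x.c4, f4 := x.f4 - x.c2, t1 := x.t1 - x.f2 }
  left_inv x := by cases x; simp
  right_inv x := by cases x; simp

/-- The move ψ₃₂ : f₁↦f₁+c₆, f₄↦f₄−c₂, t₂↦t₂−f₂. -/
def psi32 : Equiv.Perm Tuple where
  toFun x := { x with f1 := x.f1 + x.c6, f4 := x.f4 - x.c2, t2 := x.t2 - x.f2 }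
  invFun x := { x with f1 := x.f1 - x.c6, f4 := x.f4 + x.c2, t2 := x.t2 + x.f2 }
  left_inv x := by cases x; simp
  right_inv x := by cases x; simp

/-- The move ψ₄₃ : f₁↦f₁+c₅, f₂↦f₂−c₄, t₁↦t₁+f₃. -/
def psi43 : Equiv.Perm Tuple where
  toFun x := { x with f1 := x.f1 + x.c5, f2 := x.f2 - x.c4, t1 := x.t1 + x.f3 }
  invFun x := { x with f1 := x.f1 - x.c5, f2 := x.f2 + x.c4, t1 := x.t1 - x.f3 }
  left_inv x := by cases x; simp
  right_inv x := by cases x; simp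

/-- The move ψ₂₃ : f₁↦f₁−c₅, f₄↦f₄+c₃, t₂↦t₂−f₃. -/
def psi23 : Equiv.Perm Tuple where
  toFun x := { x with f1 := x.f1 - x.c5, f4 := x.f4 + x.c3, t2 := x.t2 - x.f3 }
  invFun x := { x with f1 := x.f1 + x.c5, f4 := x.f4 - x.c3, t2 := x.t2 + x.f3 }
  left_inv x := by cases x; simp
  right_inv x := by cases x; simp

/-- The move ψ₃₄ : f₁↦f₁−c₁, f₂↦f₂+c₂, t₁↦t₁+f₄. -/
def psi34 : Equiv.Perm Tuple where
  toFun x := { x with f1 := x.f1 - x.c1, f2 := x.f2 + x.c2, t1 := x.t1 + x.f4 }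
  invFun x := { x with f1 := x.f1 + x.c1, f2 := x.f2 - x.c2, t1 := x.t1 - x.f4 }
  left_inv x := by cases x; simp
  right_inv x := by cases x; simp

/-- The move ψ₁₄ : f₂↦f₂−c₂, f₃↦f₃+c₃, t₂↦t₂−f₄. -/
def psi14 : Equiv.Perm Tuple where
  toFun x := { x with f2 := x.f2 - x.c2, f3 := x.f3 + x.c3, t2 := x.t2 - x.f4 }
  invFun x := { x with f2 := x.f2 + x.c2, f3 := x.f3 - x.c3, t2 := x.t2 + x.f4 }
  left_inv x := by cases x; simp
  right_inv x := by cases x; simp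

/-- The list of the eight ψ-moves. -/
def psiMoves : List (Equiv.Perm Tuple) :=
  [psi21, psi41, psi12, psi32, psi43, psi23, psi34, psi14]

/-- Two tuples are ψ-equivalent if one is obtained from the other by a finite
composition of the eight ψ-moves and their inverses, i.e. they are related by the
equivalence relation generated by single applications of the moves. -/
def PsiEquiv : Tuple → Tuple → Prop :=
  Relation.EqvGen (fun x y => ∃ g ∈ psiMoves, g x = y)

/-!
Every move fixes the c's, and on tuples with c₂ = c₄ = c₅ = c₆ = 0, c₁ ∣ f₁ and c₃ ∣ f₃ (a set
preserved by the moves) each move changes f₄ by a multiple of c₁ or c₃ and changes c₁t₁ + f₁f₄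
and c₃t₂ + f₃f₄ by multiples of c₁c₃, c₁f₂, resp. c₃c₁, c₃f₂. So f₂ and the three residues of the
statement are invariants.

Conversely, ψ₃₄ and ψ₁₄ clear f₁ = c₁a and f₃ = c₃b at the cost of t₁ ↦ t₁ + af₄ and
t₂ ↦ t₂ + bf₄, which is where c₁t₁ + f₁f₄ = c₁(t₁ + af₄) comes from. On tuples with f₁ = f₃ = 0
the translations of (f₄, t₁, t₂) realised by ψ-equivalence form a subgroup of ℤ³. It contains
(c₁,0,0) and (c₃,0,0) (ψ₂₁, ψ₂₃), (0,f₂,0) and (0,0,f₂) (ψ₁₂, ψ₃₂), and (0,c₃,0) and (0,0,c₁)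
(ψ₄₃ conjugated by ψ₁₄, ψ₄₁ conjugated by ψ₃₄), hence by Bézout every translation allowed by
the invariants.
-/

namespace Relation.EqvGen

variable {α β : Type*} {r : α → α → Prop}

theorem apply_eq_of_invariantOn {p : α → Prop} {f : α → β}
    (hp : ∀ x y, r x y → (p x ↔ p y)) (hf : ∀ x y, r x y → p x → f x = f y)
    {x y : α} (h : EqvGen r x y) (hx : p x) : f x = f y := by
  suffices (p x ↔ p y) ∧ (p x → f x = f y) from this.2 hx
  clear hx
  induction h with
  | rel x y hxy => exact ⟨hp x y hxy, hf x y hxy⟩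
  | refl x => exact ⟨Iff.rfl, fun _ => rfl⟩
  | symm x y _ ih => exact ⟨ih.1.symm, fun hy => (ih.2 (ih.1.2 hy)).symm⟩
  | trans x y z _ _ ihxy ihyz =>
    exact ⟨ihxy.1.trans ihyz.1, fun hx => (ihxy.2 hx).trans (ihyz.2 (ihxy.1.1 hx))⟩

end Relation.EqvGen

namespace Equivalence

variable {α G : Type*} [AddGroup G] {r : G → G → Prop}

def translations (hr : Equivalence r) : AddSubgroup G where
  carrier := {v | ∀ w, r w (w + v)}
  zero_mem' w := by simpa using hr.refl w
  add_mem' {u v} hu hv w := by simpa [add_assoc] using hr.trans (hu w) (hv (w + u))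
  neg_mem' {v} hv w := by simpa using hr.symm (hv (w + -v))

theorem rel_of_forall_rel_add_one {r : α → α → Prop} (hr : Equivalence r) {Q : ℤ → α}
    (h : ∀ n, r (Q n) (Q (n + 1))) (m n : ℤ) : r (Q m) (Q n) := by
  have h1 : (1 : ℤ) ∈ (hr.comap Q).translations := h
  simpa using (hr.comap Q).translations.zsmul_mem h1 (n - m) m

end Equivalence

theorem AddSubgroup.zsmul_mem_of_gcd_dvd {G : Type*} [AddCommGroup G] (H : AddSubgroup G)
    {g : G} {a b n : ℤ} (ha : a • g ∈ H) (hb : b • g ∈ H) (hn : (Int.gcd a b : ℤ) ∣ n) :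
    n • g ∈ H := by
  obtain ⟨m, rfl⟩ := hn
  have hbezout :
      (Int.gcd a b * m) • g = (Int.gcdA a b * m) • a • g + (Int.gcdB a b * m) • b • g := by
    rw [Int.gcd_eq_gcd_ab, smul_smul, smul_smul, ← add_smul]
    ring_nf
  rw [hbezout]
  exact add_mem (H.zsmul_mem ha _) (H.zsmul_mem hb _)

def Tuple.IsCase1 (x : Tuple) : Prop :=
  x.c2 = 0 ∧ x.c4 = 0 ∧ x.c5 = 0 ∧ x.c6 = 0 ∧ x.c1 ∣ x.f1 ∧ x.c3 ∣ x.f3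

/-- Since `x % 0 = x`, a vanishing modulus gives the exact value, as congruence mod 0 is
equality. -/
def Tuple.invariants (x : Tuple) : ℤ × ℤ × ℤ × ℤ :=
  (x.f2, x.f4 % Int.gcd x.c1 x.c3, (x.c1 * x.t1 + x.f1 * x.f4) % (x.c1 * Int.gcd x.c3 x.f2),
    (x.c3 * x.t2 + x.f3 * x.f4) % (x.c3 * Int.gcd x.c1 x.f2))

theorem isCase1_move_iff {g : Equiv.Perm Tuple} (hg : g ∈ psiMoves) (x : Tuple) :
    (g x).IsCase1 ↔ x.IsCase1 := by
  simp only [psiMoves, List.mem_cons, List.not_mem_nil, or_false] at hg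
  rcases hg with rfl | rfl | rfl | rfl | rfl | rfl | rfl | rfl <;>
    simp +contextual [Tuple.IsCase1, psi21, psi41, psi12, psi32, psi43, psi23, psi34, psi14]

theorem invariants_move {g : Equiv.Perm Tuple} (hg : g ∈ psiMoves) {x : Tuple}
    (hx : x.IsCase1) : (g x).invariants = x.invariants := by
  obtain ⟨c1, c2, c3, c4, c5, c6, f1, f2, f3, f4, t1, t2⟩ := x
  obtain ⟨rfl, rfl, rfl, rfl, ⟨a, rfl⟩, ⟨b, rfl⟩⟩ :
    c2 = 0 ∧ c4 = 0 ∧ c5 = 0 ∧ c6 = 0 ∧ c1 ∣ f1 ∧ c3 ∣ f3 := hx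
  have hg1 : (Int.gcd c1 c3 : ℤ) ∣ c1 := Int.gcd_dvd_left c1 c3
  have hg3 : (Int.gcd c1 c3 : ℤ) ∣ c3 := Int.gcd_dvd_right c1 c3
  have h13 : c1 * Int.gcd c3 f2 ∣ c1 * c3 := mul_dvd_mul_left c1 (Int.gcd_dvd_left c3 f2)
  have h12 : c1 * Int.gcd c3 f2 ∣ c1 * f2 := mul_dvd_mul_left c1 (Int.gcd_dvd_right c3 f2)
  have h31 : c3 * Int.gcd c1 f2 ∣ c3 * c1 := mul_dvd_mul_left c3 (Int.gcd_dvd_left c1 f2)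
  have h32 : c3 * Int.gcd c1 f2 ∣ c3 * f2 := mul_dvd_mul_left c3 (Int.gcd_dvd_right c1 f2)
  simp only [psiMoves, List.mem_cons, List.not_mem_nil, or_false] at hg
  rcases hg with rfl | rfl | rfl | rfl | rfl | rfl | rfl | rfl <;>
    simp only [Tuple.invariants, psi21, psi41, psi12, psi32, psi43, psi23, psi34, psi14,
      Equiv.coe_fn_mk, add_zero, sub_zero, Prod.mk.injEq, and_true, true_and]
  · exact ⟨Int.modEq_iff_dvd.2 (hg1.trans ⟨1, by ring⟩), by ring_nf,
      Int.modEq_iff_dvd.2 (h31.trans ⟨b, by ring⟩)⟩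
  · exact Int.modEq_iff_dvd.2 (h31.trans ⟨a, by ring⟩)
  · exact Int.modEq_iff_dvd.2 (h12.trans ⟨-1, by ring⟩)
  · exact Int.modEq_iff_dvd.2 (h32.trans ⟨1, by ring⟩)
  · exact Int.modEq_iff_dvd.2 (h13.trans ⟨-b, by ring⟩)
  · exact ⟨Int.modEq_iff_dvd.2 (hg3.trans ⟨-1, by ring⟩),
      Int.modEq_iff_dvd.2 (h13.trans ⟨-a, by ring⟩), by ring_nf⟩
  · ring_nf
  · ring_nf

theorem invariants_eq_of_psiEquiv {x y : Tuple} (h : PsiEquiv x y) (hx : x.IsCase1) :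
    x.invariants = y.invariants :=
  Relation.EqvGen.apply_eq_of_invariantOn
    (fun x _ ⟨_, hg, hxy⟩ => hxy ▸ (isCase1_move_iff hg x).symm)
    (fun _ _ ⟨_, hg, hxy⟩ hx => hxy ▸ (invariants_move hg hx).symm) h hx

theorem PsiEquiv.of_move {g : Equiv.Perm Tuple} (hg : g ∈ psiMoves) {x y : Tuple}
    (h : g x = y) : PsiEquiv x y :=
  Relation.EqvGen.rel _ _ ⟨g, hg, h⟩

theorem psiEquiv_equivalence : Equivalence PsiEquiv :=
  Relation.EqvGen.is_equivalence _

theorem PsiEquiv.symm {x y : Tuple} (h : PsiEquiv x y) : PsiEquiv y x :=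
  psiEquiv_equivalence.symm h

theorem PsiEquiv.trans {x y z : Tuple} (hxy : PsiEquiv x y) (hyz : PsiEquiv y z) :
    PsiEquiv x z :=
  psiEquiv_equivalence.trans hxy hyz

theorem psiEquiv_reduce (c1 c3 a f2 b f4 t1 t2 : ℤ) :
    PsiEquiv ⟨c1, 0, c3, 0, 0, 0, c1 * a, f2, c3 * b, f4, t1, t2⟩
      ⟨c1, 0, c3, 0, 0, 0, 0, f2, 0, f4, t1 + a * f4, t2 + b * f4⟩ := by
  have hf1 := psiEquiv_equivalence.rel_of_forall_rel_add_one
    (Q := fun n => ⟨c1, 0, c3, 0, 0, 0, c1 * n, f2, c3 * b, f4, t1 + (a - n) * f4, t2⟩)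
    (fun n => (PsiEquiv.of_move (g := psi34) (by simp [psiMoves])
      (by simp [psi34]; constructor <;> ring)).symm)
    a 0
  have hf3 := psiEquiv_equivalence.rel_of_forall_rel_add_one
    (Q := fun n => ⟨c1, 0, c3, 0, 0, 0, 0, f2, c3 * n, f4, t1 + a * f4, t2 + (b - n) * f4⟩)
    (fun n => PsiEquiv.of_move (g := psi14) (by simp [psiMoves])
      (by simp [psi14]; constructor <;> ring))
    b 0
  simp only [sub_self, zero_mul, add_zero, mul_zero, sub_zero] at hf1 hf3
  exact hf1.trans hf3

def reduced (c1 c3 f2 : ℤ) (w : ℤ × ℤ × ℤ) : Tuple :=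
  ⟨c1, 0, c3, 0, 0, 0, 0, f2, 0, w.1, w.2.1, w.2.2⟩

def reducedTranslations (c1 c3 f2 : ℤ) : AddSubgroup (ℤ × ℤ × ℤ) :=
  (psiEquiv_equivalence.comap (reduced c1 c3 f2)).translations

section reducedTranslations

variable (c1 c3 f2 : ℤ)

theorem c1_zero_zero_mem_reducedTranslations :
    ((c1, 0, 0) : ℤ × ℤ × ℤ) ∈ reducedTranslations c1 c3 f2 :=
  fun _ => (PsiEquiv.of_move (g := psi21) (by simp [psiMoves]) (by simp [psi21, reduced])).symm

theorem c3_zero_zero_mem_reducedTranslations :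
    ((c3, 0, 0) : ℤ × ℤ × ℤ) ∈ reducedTranslations c1 c3 f2 :=
  fun _ => PsiEquiv.of_move (g := psi23) (by simp [psiMoves]) (by simp [psi23, reduced])

theorem zero_f2_zero_mem_reducedTranslations :
    ((0, f2, 0) : ℤ × ℤ × ℤ) ∈ reducedTranslations c1 c3 f2 :=
  fun _ => PsiEquiv.of_move (g := psi12) (by simp [psiMoves]) (by simp [psi12, reduced])

theorem zero_zero_f2_mem_reducedTranslations :
    ((0, 0, f2) : ℤ × ℤ × ℤ) ∈ reducedTranslations c1 c3 f2 :=
  fun _ => (PsiEquiv.of_move (g := psi32) (by simp [psiMoves]) (by simp [psi32, reduced])).symm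

theorem zero_c3_zero_mem_reducedTranslations :
    ((0, c3, 0) : ℤ × ℤ × ℤ) ∈ reducedTranslations c1 c3 f2 := fun w =>
  ((PsiEquiv.of_move (g := psi14) (by simp [psiMoves]) rfl).trans
    (PsiEquiv.of_move (g := psi43) (by simp [psiMoves]) rfl)).trans
    (PsiEquiv.of_move (g := psi14) (by simp [psiMoves]) (by simp [psi14, psi43, reduced])).symm

theorem zero_zero_c1_mem_reducedTranslations :
    ((0, 0, c1) : ℤ × ℤ × ℤ) ∈ reducedTranslations c1 c3 f2 := fun w =>
  ((PsiEquiv.of_move (g := psi34) (by simp [psiMoves]) rfl).trans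
    (PsiEquiv.of_move (g := psi41) (by simp [psiMoves]) rfl)).trans
    (PsiEquiv.of_move (g := psi34) (by simp [psiMoves]) (by simp [psi34, psi41, reduced])).symm

end reducedTranslations

theorem psiEquiv_reduced_of_dvd {c1 c3 f2 : ℤ} {w w' : ℤ × ℤ × ℤ}
    (h4 : (Int.gcd c1 c3 : ℤ) ∣ w'.1 - w.1) (h1 : (Int.gcd c3 f2 : ℤ) ∣ w'.2.1 - w.2.1)
    (h2 : (Int.gcd c1 f2 : ℤ) ∣ w'.2.2 - w.2.2) :
    PsiEquiv (reduced c1 c3 f2 w) (reduced c1 c3 f2 w') := by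
  set H := reducedTranslations c1 c3 f2
  have e4 : (w'.1 - w.1) • ((1, 0, 0) : ℤ × ℤ × ℤ) ∈ H :=
    H.zsmul_mem_of_gcd_dvd (by simpa using c1_zero_zero_mem_reducedTranslations c1 c3 f2)
      (by simpa using c3_zero_zero_mem_reducedTranslations c1 c3 f2) h4
  have e1 : (w'.2.1 - w.2.1) • ((0, 1, 0) : ℤ × ℤ × ℤ) ∈ H :=
    H.zsmul_mem_of_gcd_dvd (by simpa using zero_c3_zero_mem_reducedTranslations c1 c3 f2)
      (by simpa using zero_f2_zero_mem_reducedTranslations c1 c3 f2) h1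
  have e2 : (w'.2.2 - w.2.2) • ((0, 0, 1) : ℤ × ℤ × ℤ) ∈ H :=
    H.zsmul_mem_of_gcd_dvd (by simpa using zero_zero_c1_mem_reducedTranslations c1 c3 f2)
      (by simpa using zero_zero_f2_mem_reducedTranslations c1 c3 f2) h2
  have hmem : w' - w ∈ H := by
    convert add_mem (add_mem e4 e1) e2 using 1
    ext <;> simp
  simpa using hmem w

/-- Classification when c₂ = c₄ = c₅ = c₆ = 0, c₁, c₃ ≠ 0, c₁ ∣ f₁ and c₃ ∣ f₃:
two such tuples are ψ-equivalent iff f₂ = f₂′, f₄ ≡ f₄′ (mod gcd(c₁,c₃)),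
c₁t₁+f₁f₄ ≡ c₁t₁′+f₁′f₄′ (mod c₁·gcd(c₃,f₂)) and
c₃t₂+f₃f₄ ≡ c₃t₂′+f₃′f₄′ (mod c₃·gcd(c₁,f₂)). -/
theorem classification_case1 (c1 c3 f1 f2 f3 f4 t1 t2 f1' f2' f3' f4' t1' t2' : ℤ)
    (hc1 : c1 ≠ 0) (hc3 : c3 ≠ 0)
    (h1 : c1 ∣ f1) (h1' : c1 ∣ f1') (h3 : c3 ∣ f3) (h3' : c3 ∣ f3') :
    PsiEquiv ⟨c1, 0, c3, 0, 0, 0, f1, f2, f3, f4, t1, t2⟩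
        ⟨c1, 0, c3, 0, 0, 0, f1', f2', f3', f4', t1', t2'⟩ ↔
      (f2 = f2' ∧
        (Int.gcd c1 c3 : ℤ) ∣ f4 - f4' ∧
        c1 * (Int.gcd c3 f2 : ℤ) ∣ (c1 * t1 + f1 * f4) - (c1 * t1' + f1' * f4') ∧
        c3 * (Int.gcd c1 f2 : ℤ) ∣ (c3 * t2 + f3 * f4) - (c3 * t2' + f3' * f4')) := by
  constructor
  · intro h
    have hinv := invariants_eq_of_psiEquiv h ⟨rfl, rfl, rfl, rfl, h1, h3⟩
    simp only [Tuple.invariants, Prod.mk.injEq] at hinv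
    obtain ⟨rfl, h4, hτ1, hτ2⟩ := hinv
    exact ⟨rfl, (Int.ModEq.symm h4).dvd, (Int.ModEq.symm hτ1).dvd, (Int.ModEq.symm hτ2).dvd⟩
  · rintro ⟨rfl, h4, hτ1, hτ2⟩
    obtain ⟨a, rfl⟩ := h1
    obtain ⟨a', rfl⟩ := h1'
    obtain ⟨b, rfl⟩ := h3
    obtain ⟨b', rfl⟩ := h3'
    refine (psiEquiv_reduce c1 c3 a f2 b f4 t1 t2).trans
      ((psiEquiv_reduced_of_dvd (w := (f4, _, _)) (w' := (f4', _, _))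
        (dvd_sub_comm.1 h4) ?_ ?_).trans
        (psiEquiv_reduce c1 c3 a' f2 b' f4' t1' t2').symm)
    · rw [show c1 * t1 + c1 * a * f4 - (c1 * t1' + c1 * a' * f4')
          = c1 * (t1 + a * f4 - (t1' + a' * f4')) by ring] at hτ1
      exact dvd_sub_comm.1 ((mul_dvd_mul_iff_left hc1).1 hτ1)
    · rw [show c3 * t2 + c3 * b * f4 - (c3 * t2' + c3 * b' * f4')
          = c3 * (t2 + b * f4 - (t2' + b' * f4')) by ring] at hτ2
      exact dvd_sub_comm.1 ((mul_dvd_mul_iff_left hc3).1 hτ2)
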